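/- arXiv:1604.07814 — 4 statements merged into one kernel-verified Lean document; each statement's English description precedes it below -/
import Mathlib

section
/- Let c > 0. A point x ∈ X minimizes f over X if and only if, for every i = 1,…,m, x^i minimizes the regularized function z^i ↦ f(z^i, x^{-i}) + c‖z^i − x^i‖² over X^i. (That is, the set M of minimizers of f over X coincides with the fixed-point set F_T̃ of the regularized Jacobi map.) -/
open Matrix Filter Topology
open scoped RealInnerProductSpace

noncomputable section

/-- The product decision space of `m` agents, agent `i` having an `n i`-dimensional
Euclidean decision vector; equipped with the (ℓ²-of-ℓ²) Euclidean norm. -/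
abbrev JVec (m : ℕ) (n : Fin m → ℕ) :=
  PiLp 2 (fun i : Fin m => EuclideanSpace ℝ (Fin (n i)))

/-- `upd x i z` is the vector `(z, x^{-i})`: `x` with its `i`-th block replaced by `z`. -/
def upd {m : ℕ} {n : Fin m → ℕ} (x : JVec m n) (i : Fin m)
    (z : EuclideanSpace ℝ (Fin (n i))) : JVec m n :=
  WithLp.toLp 2 (Function.update x i z)

/-!
If every block `xⁱ` minimizes `zⁱ ↦ f(zⁱ, x^{-i}) + c‖zⁱ − xⁱ‖²` over the convex set `Xⁱ`, the
proximal term has zero derivative at `xⁱ`, so Fermat's rule gives `∂ᵢf(x)(yⁱ − xⁱ) ≥ 0` for all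
`yⁱ ∈ Xⁱ`. Summing over the blocks, `f'(x)(y − x) ≥ 0` for every `y ∈ X`, and the first-order
characterization of convexity, `f x + f'(x)(y − x) ≤ f y`, makes `x` a global minimizer.
-/

open scoped ENNReal

theorem ConvexOn.add_fderiv_sub_le {E : Type*} [NormedAddCommGroup E] [NormedSpace ℝ E]
    {s : Set E} {f : E → ℝ} {f' : E →L[ℝ] ℝ} {x y : E} (hfc : ConvexOn ℝ s f)
    (hx : x ∈ s) (hy : y ∈ s) (hf : HasFDerivAt f f' x) :
    f x + f' (y - x) ≤ f y := by
  let ℓ : ℝ →ᵃ[ℝ] E := AffineMap.lineMap x y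
  have hderiv : HasDerivAt (f ∘ ℓ) (f' (y - x)) 0 :=
    hf.comp_hasDerivAt_of_eq 0 AffineMap.hasDerivAt_lineMap (by simp [ℓ])
  have hslope := (hfc.comp_affineMap ℓ).le_slope_of_hasDerivAt (by simpa [ℓ]) (by simpa [ℓ])
    one_pos hderiv
  simp only [slope_def_field, Function.comp_apply, ℓ, AffineMap.lineMap_apply_zero,
    AffineMap.lineMap_apply_one, sub_zero, div_one] at hslope
  linarith

theorem le_fderiv_sub_of_isMinOn_add_sq_norm_sub {F : Type*} [NormedAddCommGroup F]
    [InnerProductSpace ℝ F] {φ : F → ℝ} {φ' : F →L[ℝ] ℝ} {s : Set F} {a b : F} {c : ℝ}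
    (hs : Convex ℝ s) (ha : a ∈ s) (hb : b ∈ s) (hφ : HasFDerivAt φ φ' a)
    (hmin : IsMinOn (fun z => φ z + c * ‖z - a‖ ^ 2) s a) : 0 ≤ φ' (b - a) := by
  have hsq : HasFDerivAt (fun z => c * ‖z - a‖ ^ 2) (0 : F →L[ℝ] ℝ) a := by
    simpa using (((hasFDerivAt_id a).sub_const a).norm_sq).const_mul c
  simpa using hmin.localize.hasFDerivWithinAt_nonneg (hφ.add hsq).hasFDerivWithinAt
    (sub_mem_posTangentConeAt_of_segment_subset (hs.segment_subset ha hb))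

namespace PiLp

variable (p : ℝ≥0∞) (𝕜 : Type*) {ι : Type*} [DecidableEq ι] (β : ι → Type*) [Semiring 𝕜]
  [∀ i, AddCommGroup (β i)] [∀ i, Module 𝕜 (β i)] [∀ i, TopologicalSpace (β i)]

def singleCLM (i : ι) : β i →L[𝕜] PiLp p β :=
  (PiLp.continuousLinearEquiv p 𝕜 β).symm.toContinuousLinearMap ∘L
    ContinuousLinearMap.single 𝕜 β i

@[simp]
theorem singleCLM_apply (i : ι) (a : β i) : singleCLM p 𝕜 β i a = PiLp.single p i a := rfl

end PiLp

theorem PiLp.sum_single {p : ℝ≥0∞} {ι : Type*} [Fintype ι] [DecidableEq ι] {β : ι → Type*}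
    [∀ i, AddCommGroup (β i)] (x : PiLp p β) : ∑ i, PiLp.single p i (x i) = x := by
  simp only [← PiLp.toLp_single, ← WithLp.toLp_sum, Finset.univ_sum_single, WithLp.toLp_ofLp]

section upd

variable {m : ℕ} {n : Fin m → ℕ}

theorem upd_self (x : JVec m n) (i : Fin m) : upd x i (x i) = x := by
  simp [upd]

theorem upd_mem {X : ∀ i : Fin m, Set (EuclideanSpace ℝ (Fin (n i)))} {x : JVec m n}
    (hx : ∀ j, x j ∈ X j) {i : Fin m} {z : EuclideanSpace ℝ (Fin (n i))} (hz : z ∈ X i) :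
    ∀ j, upd x i z j ∈ X j := by
  intro j
  rcases eq_or_ne j i with rfl | hj
  · simpa [upd] using hz
  · simpa [upd, Function.update_of_ne hj] using hx j

theorem upd_eq_add_single (x : JVec m n) (i : Fin m) (z : EuclideanSpace ℝ (Fin (n i))) :
    upd x i z = x + PiLp.single 2 i (z - x i) := by
  ext j : 1
  rcases eq_or_ne j i with rfl | hj
  · simp [upd]
  · simp [upd, Function.update_of_ne hj, Pi.single_eq_of_ne hj]

theorem hasFDerivAt_upd (x : JVec m n) (i : Fin m) (z : EuclideanSpace ℝ (Fin (n i))) :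
    HasFDerivAt (upd x i) (PiLp.singleCLM 2 ℝ (fun j => EuclideanSpace ℝ (Fin (n j))) i) z := by
  rw [funext (upd_eq_add_single x i)]
  have hsingle := (PiLp.singleCLM 2 ℝ (fun j => EuclideanSpace ℝ (Fin (n j))) i).hasFDerivAt
    (x := z - x i)
  simpa using (hsingle.comp z ((hasFDerivAt_id z).sub_const (x i))).const_add x

end upd

theorem stmt_3_general {m : ℕ} {n : Fin m → ℕ}
    (X : ∀ i : Fin m, Set (EuclideanSpace ℝ (Fin (n i))))
    (hXcvx : ∀ i, Convex ℝ (X i))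
    (f : JVec m n → ℝ)
    (hf : ContDiff ℝ 1 f)
    (hfc : ConvexOn ℝ Set.univ f)
    (c : ℝ) (hc : 0 < c)
    (x : JVec m n) (hx : ∀ i, x i ∈ X i) :
    (∀ y : JVec m n, (∀ i, y i ∈ X i) → f x ≤ f y) ↔
      (∀ i : Fin m, ∀ z ∈ X i, f x ≤ f (upd x i z) + c * ‖z - x i‖ ^ 2) := by
  refine ⟨fun hmin i z hz => ?_, fun hblock y hy => ?_⟩
  · calc f x ≤ f (upd x i z) := hmin _ (upd_mem hx hz)
      _ ≤ f (upd x i z) + c * ‖z - x i‖ ^ 2 := le_add_of_nonneg_right (by positivity)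
  · have hf' : HasFDerivAt f (fderiv ℝ f x) x := (hf.differentiable one_ne_zero x).hasFDerivAt
    have hblock_deriv : ∀ i, 0 ≤ fderiv ℝ f x (PiLp.single 2 i (y i - x i)) := by
      intro i
      have hfi := (by rwa [upd_self] : HasFDerivAt f (fderiv ℝ f x) (upd x i (x i))).comp (x i)
        (hasFDerivAt_upd x i (x i))
      simpa using le_fderiv_sub_of_isMinOn_add_sq_norm_sub (hXcvx i) (hx i) (hy i) hfi
        (fun z hz => by simpa [upd_self] using hblock i z hz)
    have hdir : 0 ≤ fderiv ℝ f x (y - x) := by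
      rw [← PiLp.sum_single (y - x), map_sum]
      exact Finset.sum_nonneg fun i _ => by simpa using hblock_deriv i
    linarith [hfc.add_fderiv_sub_le (Set.mem_univ x) (Set.mem_univ y) hf']

/-- For `c > 0`: a point `x ∈ X` minimizes `f` over `X` iff each block `xⁱ` minimizes the
regularized `zⁱ ↦ f(zⁱ, x^{-i}) + c‖zⁱ − xⁱ‖²` over `Xⁱ` (i.e. `M = F_T̃`). -/
theorem stmt_3 {m : ℕ} {n : Fin m → ℕ}
    (X : ∀ i : Fin m, Set (EuclideanSpace ℝ (Fin (n i))))
    (hXne : ∀ i, (X i).Nonempty)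
    (hXcpt : ∀ i, IsCompact (X i))
    (hXcvx : ∀ i, Convex ℝ (X i))
    (f : JVec m n → ℝ)
    (hf : ContDiff ℝ 1 f)
    (hfc : ConvexOn ℝ Set.univ f)
    (c : ℝ) (hc : 0 < c)
    (x : JVec m n) (hx : ∀ i, x i ∈ X i) :
    (∀ y : JVec m n, (∀ i, y i ∈ X i) → f x ≤ f y) ↔
      (∀ i : Fin m, ∀ z ∈ X i, f x ≤ f (upd x i z) + c * ‖z - x i‖ ^ 2) :=
  stmt_3_general X hXcvx f hf hfc c hc x hx
end
end

section
/- Suppose c > λ_max(Q_z). Let x, y ∈ X, let u ∈ X minimize z ↦ Σ_{i=1}^m [ f(z^i, x^{-i}) + c‖z^i − x^i‖² ] over X, and let w ∈ X minimize z ↦ Σ_{i=1}^m [ f(z^i, y^{-i}) + c‖z^i − y^i‖² ] over X. Then ‖u − w‖²_{Q_d + cI − Q} ≤ (x − y)ᵀ(Q_d + cI − Q)(u − w); that is, the regularized Jacobi update map T̃ is firmly nonexpansive with respect to the norm induced by the positive definite matrix Q_d + cI − Q. -/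
open Matrix Filter Topology
open scoped RealInnerProductSpace

noncomputable section

/-- The index set of the stacked vector `x = (x^1, …, x^m)`. -/
abbrev JIdx (m : ℕ) (n : Fin m → ℕ) := Σ i : Fin m, Fin (n i)

/-- Flatten a block vector into a plain vector indexed by `JIdx m n`. -/
def flat {m : ℕ} {n : Fin m → ℕ} (x : JVec m n) : JIdx m n → ℝ :=
  fun p => x p.1 p.2

/-- The block-diagonal part `Q_d` of `Q`: equal to `Q` on entries whose row and column
indices lie in the same agent block, and zero elsewhere. -/
def blockDiagPart {m : ℕ} {n : Fin m → ℕ} (Q : Matrix (JIdx m n) (JIdx m n) ℝ) :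
    Matrix (JIdx m n) (JIdx m n) ℝ :=
  Matrix.of fun p q => if p.1 = q.1 then Q p q else 0

/-- The quadratic objective `f(x) = xᵀ Q x + qᵀ x`. -/
def quadF {m : ℕ} {n : Fin m → ℕ} (Q : Matrix (JIdx m n) (JIdx m n) ℝ)
    (q : JIdx m n → ℝ) (x : JVec m n) : ℝ :=
  flat x ⬝ᵥ (Q *ᵥ flat x) + q ⬝ᵥ flat x

/-- The largest eigenvalue of a real symmetric (Hermitian) matrix. -/
noncomputable def maxEig {ι : Type*} [Fintype ι] [DecidableEq ι]
    {A : Matrix ι ι ℝ} (hA : A.IsHermitian) : ℝ :=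
  ⨆ p, hA.eigenvalues p

/-! In the displacement `g = v − x`, the Jacobi objective at `x` is, up to a constant,
`g ↦ (2Qx + q)ᵀg + gᵀ(Q_d + cI)g`. Minimality of `u` on the convex set `X` therefore gives the
variational inequality `(2Qx + q + 2(Q_d + cI)(u − x))ᵀ(w − u) ≥ 0`, and likewise for `w`.
Adding the two yields `‖u − w‖²_{Q_d + cI} ≤ (x − y)ᵀ(Q_d + cI − Q)(u − w)`, and since `Q ⪰ 0`
the left side dominates `‖u − w‖²_{Q_d + cI − Q}`. -/

theorem nonneg_of_forall_Ioc_mul_add_sq_mul_nonneg {L K : ℝ}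
    (h : ∀ t ∈ Set.Ioc (0 : ℝ) 1, 0 ≤ t * L + t ^ 2 * K) : 0 ≤ L := by
  have hlim : Tendsto (fun t : ℝ => L + t * K) (𝓝[>] 0) (𝓝 L) := by
    have : Tendsto (fun t : ℝ => L + t * K) (𝓝 0) (𝓝 (L + 0 * K)) :=
      tendsto_const_nhds.add (tendsto_id.mul_const K)
    simpa using this.mono_left nhdsWithin_le_nhds
  refine ge_of_tendsto hlim ?_
  filter_upwards [Ioc_mem_nhdsGT one_pos] with t ht
  have hfactor : t * L + t ^ 2 * K = t * (L + t * K) := by ring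
  exact (mul_nonneg_iff_of_pos_left ht.1).1 (hfactor ▸ h t ht)

theorem IsMinOn.nonneg_of_segment_eq {E : Type*} [AddCommGroup E] [Module ℝ E] {S : Set E}
    {F : E → ℝ} {a d : E} {L K : ℝ} (hmin : IsMinOn F S a) (hS : Convex ℝ S) (ha : a ∈ S)
    (hd : d ∈ S) (hF : ∀ t : ℝ, F (a + t • (d - a)) = F a + t * L + t ^ 2 * K) : 0 ≤ L := by
  refine nonneg_of_forall_Ioc_mul_add_sq_mul_nonneg (K := K) fun t ht => ?_
  have h : F a ≤ F (a + t • (d - a)) :=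
    hmin (hS.add_smul_sub_mem ha hd (Set.Ioc_subset_Icc_self ht))
  linarith [hF t]

theorem Matrix.IsSymm.dotProduct_mulVec_comm {ι R : Type*} [Fintype ι] [CommSemiring R]
    {A : Matrix ι ι R} (hA : A.IsSymm) (v w : ι → R) : v ⬝ᵥ A *ᵥ w = w ⬝ᵥ A *ᵥ v := by
  rw [dotProduct_mulVec, dotProduct_comm, ← mulVec_transpose, hA.eq]

theorem Matrix.IsSymm.quadratic_add {ι : Type*} [Fintype ι] {A : Matrix ι ι ℝ}
    (hA : A.IsSymm) (b a e : ι → ℝ) :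
    b ⬝ᵥ (a + e) + (a + e) ⬝ᵥ A *ᵥ (a + e) =
      (b ⬝ᵥ a + a ⬝ᵥ A *ᵥ a) + (b + 2 • A *ᵥ a) ⬝ᵥ e + e ⬝ᵥ A *ᵥ e := by
  simp only [mulVec_add, dotProduct_add, add_dotProduct, smul_dotProduct,
    dotProduct_comm (A *ᵥ a) e, hA.dotProduct_mulVec_comm e a]
  ring

theorem firmly_nonexpansive_of_variational_inequalities {ι : Type*} [Fintype ι]
    {Q A : Matrix ι ι ℝ} (hQ : Q.PosSemidef) (hA : A.IsSymm) {b x y u w : ι → ℝ}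
    (hu : 0 ≤ (2 • Q *ᵥ x + b + 2 • A *ᵥ (u - x)) ⬝ᵥ (w - u))
    (hw : 0 ≤ (2 • Q *ᵥ y + b + 2 • A *ᵥ (w - y)) ⬝ᵥ (u - w)) :
    (u - w) ⬝ᵥ (A - Q) *ᵥ (u - w) ≤ (x - y) ⬝ᵥ (A - Q) *ᵥ (u - w) := by
  have hQs : Q.IsSymm := isHermitian_iff_isSymm.1 hQ.isHermitian
  have hpos : 0 ≤ (u - w) ⬝ᵥ Q *ᵥ (u - w) := by
    simpa using hQ.dotProduct_mulVec_nonneg (u - w)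
  have hsum : (2 • Q *ᵥ x + b + 2 • A *ᵥ (u - x)) ⬝ᵥ (w - u)
      + (2 • Q *ᵥ y + b + 2 • A *ᵥ (w - y)) ⬝ᵥ (u - w)
      = 2 * ((A - Q) *ᵥ (x - y) ⬝ᵥ (u - w) - A *ᵥ (u - w) ⬝ᵥ (u - w)) := by
    simp only [mulVec_sub, sub_mulVec, add_dotProduct, sub_dotProduct, dotProduct_sub,
      smul_dotProduct]
    ring
  calc (u - w) ⬝ᵥ (A - Q) *ᵥ (u - w)
      = A *ᵥ (u - w) ⬝ᵥ (u - w) - (u - w) ⬝ᵥ Q *ᵥ (u - w) := by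
        rw [sub_mulVec, dotProduct_sub, dotProduct_comm]
    _ ≤ A *ᵥ (u - w) ⬝ᵥ (u - w) := sub_le_self _ hpos
    _ ≤ (A - Q) *ᵥ (x - y) ⬝ᵥ (u - w) := by linarith
    _ = (x - y) ⬝ᵥ (A - Q) *ᵥ (u - w) := by
        rw [(hA.sub hQs).dotProduct_mulVec_comm, dotProduct_comm]

section Blocks

variable {m : ℕ} {n : Fin m → ℕ}

def blockRestrict (i : Fin m) (a : JIdx m n → ℝ) : JIdx m n → ℝ :=
  fun p => if p.1 = i then a p else 0

theorem sum_blockRestrict (a : JIdx m n → ℝ) : ∑ i, blockRestrict i a = a := by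
  funext p
  simp [blockRestrict, Finset.sum_apply]

theorem sum_blockRestrict_dotProduct_mulVec (Q : Matrix (JIdx m n) (JIdx m n) ℝ)
    (a : JIdx m n → ℝ) :
    ∑ i, blockRestrict i a ⬝ᵥ Q *ᵥ blockRestrict i a = a ⬝ᵥ blockDiagPart Q *ᵥ a := by
  simp only [dotProduct, mulVec, blockRestrict, blockDiagPart, of_apply, Finset.mul_sum]
  rw [Finset.sum_comm]
  refine Finset.sum_congr rfl fun p _ => ?_
  rw [Finset.sum_comm]
  refine Finset.sum_congr rfl fun r _ => ?_
  by_cases h : p.1 = r.1 <;> simp [h, eq_comm]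

theorem blockDiagPart_isSymm {Q : Matrix (JIdx m n) (JIdx m n) ℝ} (hQ : Q.IsSymm) :
    (blockDiagPart Q).IsSymm :=
  IsSymm.ext fun p r => by
    simp only [blockDiagPart, of_apply, eq_comm (a := r.1), hQ.apply]

theorem flat_add (x y : JVec m n) : flat (x + y) = flat x + flat y := rfl

theorem flat_sub (x y : JVec m n) : flat (x - y) = flat x - flat y := rfl

theorem flat_smul (t : ℝ) (x : JVec m n) : flat (t • x) = t • flat x := rfl

theorem flat_upd (x v : JVec m n) (i : Fin m) :
    flat (upd x i (v i)) = flat x + blockRestrict i (flat v - flat x) := by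
  funext p
  rcases eq_or_ne p.1 i with rfl | h
  · simp [flat, upd, blockRestrict]
  · simp [flat, upd, blockRestrict, h]

theorem sum_norm_sub_sq_eq_dotProduct (x v : JVec m n) :
    ∑ i, ‖v i - x i‖ ^ 2 = (flat v - flat x) ⬝ᵥ (flat v - flat x) := by
  rw [dotProduct, Fintype.sum_sigma]
  refine Finset.sum_congr rfl fun i _ => ?_
  rw [EuclideanSpace.norm_sq_eq]
  simp [flat, sq]

end Blocks

section Jacobi

variable {m : ℕ} {n : Fin m → ℕ}

def jacobiObjective (Q : Matrix (JIdx m n) (JIdx m n) ℝ) (q : JIdx m n → ℝ) (c : ℝ)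
    (x v : JVec m n) : ℝ :=
  ∑ i, (quadF Q q (upd x i (v i)) + c * ‖v i - x i‖ ^ 2)

theorem jacobiObjective_eq {Q : Matrix (JIdx m n) (JIdx m n) ℝ} (hQ : Q.IsSymm)
    (q : JIdx m n → ℝ) (c : ℝ) (x v : JVec m n) :
    jacobiObjective Q q c x v = m * quadF Q q x +
      ((2 • Q *ᵥ flat x + q) ⬝ᵥ (flat v - flat x) +
        (flat v - flat x) ⬝ᵥ (blockDiagPart Q + c • 1) *ᵥ (flat v - flat x)) := by
  have hupd : ∀ i, quadF Q q (upd x i (v i)) = quadF Q q x +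
      ((2 • Q *ᵥ flat x + q) ⬝ᵥ blockRestrict i (flat v - flat x) +
        blockRestrict i (flat v - flat x) ⬝ᵥ Q *ᵥ blockRestrict i (flat v - flat x)) := by
    intro i
    rw [quadF, flat_upd, quadF, add_comm _ (q ⬝ᵥ _), hQ.quadratic_add, add_comm q]
    ring
  simp only [jacobiObjective, Finset.sum_add_distrib, hupd, ← Finset.mul_sum,
    sum_norm_sub_sq_eq_dotProduct, ← dotProduct_sum, sum_blockRestrict,
    sum_blockRestrict_dotProduct_mulVec, Finset.sum_const, Finset.card_univ,
    Fintype.card_fin, nsmul_eq_mul]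
  rw [add_mulVec, dotProduct_add, smul_mulVec, one_mulVec, dotProduct_smul, smul_eq_mul]
  ring

theorem jacobiObjective_variational_inequality
    {X : ∀ i : Fin m, Set (EuclideanSpace ℝ (Fin (n i)))} (hX : ∀ i, Convex ℝ (X i))
    {Q : Matrix (JIdx m n) (JIdx m n) ℝ} (hQ : Q.IsSymm) (q : JIdx m n → ℝ) (c : ℝ)
    {x u d : JVec m n} (hmin : IsMinOn (jacobiObjective Q q c x) {v | ∀ i, v i ∈ X i} u)
    (hu : ∀ i, u i ∈ X i) (hd : ∀ i, d i ∈ X i) :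
    0 ≤ (2 • Q *ᵥ flat x + q + 2 • (blockDiagPart Q + c • 1) *ᵥ (flat u - flat x)) ⬝ᵥ
      (flat d - flat u) := by
  set A := blockDiagPart Q + c • (1 : Matrix (JIdx m n) (JIdx m n) ℝ)
  have hA : A.IsSymm := (blockDiagPart_isSymm hQ).add (isSymm_one.smul c)
  have hconvex : Convex ℝ {v : JVec m n | ∀ i, v i ∈ X i} :=
    fun a ha b hb s t hs ht hst i => hX i (ha i) (hb i) hs ht hst
  refine hmin.nonneg_of_segment_eq hconvex hu hd
    (K := (flat d - flat u) ⬝ᵥ A *ᵥ (flat d - flat u)) fun t => ?_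
  have hshift : flat (u + t • (d - u)) - flat x = (flat u - flat x) + t • (flat d - flat u) := by
    simp only [flat_add, flat_smul, flat_sub]
    abel
  rw [jacobiObjective_eq hQ, jacobiObjective_eq hQ, hshift, hA.quadratic_add]
  simp only [dotProduct_smul, smul_dotProduct, mulVec_smul, smul_eq_mul]
  ring

end Jacobi

theorem stmt_4_general {m : ℕ} {n : Fin m → ℕ}
    (X : ∀ i : Fin m, Set (EuclideanSpace ℝ (Fin (n i))))
    (hXcvx : ∀ i, Convex ℝ (X i))
    (Q : Matrix (JIdx m n) (JIdx m n) ℝ) (hQ : Q.PosSemidef)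
    (q : JIdx m n → ℝ)
    (c : ℝ)
    (x y u w : JVec m n)
    (huX : ∀ i, u i ∈ X i) (hwX : ∀ i, w i ∈ X i)
    (hu : ∀ v : JVec m n, (∀ i, v i ∈ X i) →
      (∑ i : Fin m, (quadF Q q (upd x i (u i)) + c * ‖u i - x i‖ ^ 2)) ≤
        ∑ i : Fin m, (quadF Q q (upd x i (v i)) + c * ‖v i - x i‖ ^ 2))
    (hw : ∀ v : JVec m n, (∀ i, v i ∈ X i) →
      (∑ i : Fin m, (quadF Q q (upd y i (w i)) + c * ‖w i - y i‖ ^ 2)) ≤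
        ∑ i : Fin m, (quadF Q q (upd y i (v i)) + c * ‖v i - y i‖ ^ 2)) :
    flat (u - w) ⬝ᵥ ((blockDiagPart Q + c • (1 : Matrix (JIdx m n) (JIdx m n) ℝ) - Q)
        *ᵥ flat (u - w)) ≤
      flat (x - y) ⬝ᵥ ((blockDiagPart Q + c • (1 : Matrix (JIdx m n) (JIdx m n) ℝ) - Q)
        *ᵥ flat (u - w)) := by
  have hQs : Q.IsSymm := isHermitian_iff_isSymm.1 hQ.isHermitian
  exact firmly_nonexpansive_of_variational_inequalities hQ
    ((blockDiagPart_isSymm hQs).add (isSymm_one.smul c))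
    (jacobiObjective_variational_inequality hXcvx hQs q c hu huX hwX)
    (jacobiObjective_variational_inequality hXcvx hQs q c hw hwX huX)

/-- The regularized Jacobi update map is firmly nonexpansive w.r.t. the norm induced by
the positive definite matrix `Q_d + cI − Q`, when `c > λ_max(Q_z)`. -/
theorem stmt_4 {m : ℕ} {n : Fin m → ℕ} [Nonempty (JIdx m n)]
    (X : ∀ i : Fin m, Set (EuclideanSpace ℝ (Fin (n i))))
    (hXne : ∀ i, (X i).Nonempty)
    (hXcpt : ∀ i, IsCompact (X i))
    (hXcvx : ∀ i, Convex ℝ (X i))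
    (Q : Matrix (JIdx m n) (JIdx m n) ℝ) (hQ : Q.PosSemidef)
    (q : JIdx m n → ℝ)
    (hQz : (Q - blockDiagPart Q).IsHermitian)
    (c : ℝ) (hc : maxEig hQz < c)
    (x y u w : JVec m n)
    (hx : ∀ i, x i ∈ X i) (hy : ∀ i, y i ∈ X i)
    (huX : ∀ i, u i ∈ X i) (hwX : ∀ i, w i ∈ X i)
    (hu : ∀ v : JVec m n, (∀ i, v i ∈ X i) →
      (∑ i : Fin m, (quadF Q q (upd x i (u i)) + c * ‖u i - x i‖ ^ 2)) ≤
        ∑ i : Fin m, (quadF Q q (upd x i (v i)) + c * ‖v i - x i‖ ^ 2))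
    (hw : ∀ v : JVec m n, (∀ i, v i ∈ X i) →
      (∑ i : Fin m, (quadF Q q (upd y i (w i)) + c * ‖w i - y i‖ ^ 2)) ≤
        ∑ i : Fin m, (quadF Q q (upd y i (v i)) + c * ‖v i - y i‖ ^ 2)) :
    flat (u - w) ⬝ᵥ ((blockDiagPart Q + c • (1 : Matrix (JIdx m n) (JIdx m n) ℝ) - Q)
        *ᵥ flat (u - w)) ≤
      flat (x - y) ⬝ᵥ ((blockDiagPart Q + c • (1 : Matrix (JIdx m n) (JIdx m n) ℝ) - Q)
        *ᵥ flat (u - w)) :=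
  stmt_4_general X hXcvx Q hQ q c x y u w huX hwX hu hw
end
end

section
/- For x ∈ X define g_x : ℝ^n → ℝ by g_x(z) = Σ_{i=1}^m f(z^i, x^{-i}), where z = (z^1,…,z^m). Then for all x, y, z ∈ X, ‖∇g_x(z) − ∇g_y(z)‖ ≤ √m · L · ‖x − y‖. -/
/-!
The `j`-th block of `∇g_x(z)` is the `j`-th block of `∇f(z^j, x^{-j})`, so the `j`-th block of
`∇g_x(z) − ∇g_y(z)` is bounded by `L ‖(z^j, x^{-j}) − (z^j, y^{-j})‖ ≤ L ‖x − y‖`. Adding up the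
squares of the `m` blocks gives the factor `√m`.
-/

open Matrix Filter Topology
open scoped RealInnerProductSpace

noncomputable section

open WithLp

namespace PiLp

variable {ι : Type*} [Fintype ι] {E : ι → Type*}

section Norm

variable [∀ i, SeminormedAddCommGroup (E i)]

theorem norm_le_sqrt_card_mul {w : PiLp 2 E} {C : ℝ} (h : ∀ j, ‖w j‖ ≤ C) :
    ‖w‖ ≤ √(Fintype.card ι) * C := by
  rcases isEmpty_or_nonempty ι with hι | ⟨⟨j₀⟩⟩
  · simp [Subsingleton.elim w 0]
  have hC : 0 ≤ C := (norm_nonneg _).trans (h j₀)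
  rw [norm_eq_of_L2, ← Real.sqrt_sq hC, ← Real.sqrt_mul (Nat.cast_nonneg _)]
  gcongr
  calc ∑ j, ‖w j‖ ^ 2 ≤ ∑ _j : ι, C ^ 2 := by gcongr with j; exact h j
    _ = Fintype.card ι * C ^ 2 := by simp

theorem norm_toLp_update_zero_le [DecidableEq ι] (w : PiLp 2 E) (i : ι) :
    ‖toLp 2 (Function.update (ofLp w) i 0)‖ ≤ ‖w‖ := by
  rw [norm_eq_of_L2, norm_eq_of_L2]
  gcongr with k
  rcases eq_or_ne k i with rfl | hk
  · simp
  · simp [hk]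

theorem norm_toLp_update_sub_toLp_update_le [DecidableEq ι] (x y : PiLp 2 E) (i : ι)
    (c : E i) :
    ‖toLp 2 (Function.update (ofLp x) i c) - toLp 2 (Function.update (ofLp y) i c)‖ ≤ ‖x - y‖ := by
  rw [← toLp_sub, ← Function.update_sub, sub_self]
  exact norm_toLp_update_zero_le (x - y) i

theorem norm_toLp_diag_sub_le {u v : ι → PiLp 2 E} {C : ℝ} (h : ∀ j, ‖u j - v j‖ ≤ C) :
    ‖toLp 2 (fun j => u j j) - toLp 2 (fun j => v j j)‖ ≤ √(Fintype.card ι) * C :=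
  norm_le_sqrt_card_mul fun j => (norm_apply_le (u j - v j) j).trans (h j)

end Norm

section Gradient

variable {𝕜 : Type*} [RCLike 𝕜] [∀ i, NormedAddCommGroup (E i)] [∀ i, InnerProductSpace 𝕜 (E i)]

theorem inner_single_right [DecidableEq ι] (u : PiLp 2 E) (i : ι) (c : E i) :
    inner 𝕜 u (single 2 i c) = inner 𝕜 (u i) c := by
  rw [inner_apply, Fintype.sum_eq_single i fun j hj => by simp [Pi.single_eq_of_ne hj]]
  simp

theorem hasFDerivAt_toLp_update [DecidableEq ι] (x : PiLp 2 E) (i : ι) (z : PiLp 2 E) :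
    HasFDerivAt (fun w : PiLp 2 E => toLp 2 (Function.update (ofLp x) i (w i)))
      ((continuousLinearEquiv 2 𝕜 E).symm.toContinuousLinearMap ∘L
        ContinuousLinearMap.single 𝕜 E i ∘L proj 2 E i) z := by
  have hpi : ContinuousLinearMap.pi (Pi.single i (.id 𝕜 (E i))) =
      ContinuousLinearMap.single 𝕜 E i := by
    ext c j
    rcases eq_or_ne j i with rfl | hj <;> simp [*]
  have hupd :=
    (hasFDerivAt_update (𝕜 := 𝕜) (ofLp x) (z i)).comp z (hasFDerivAt_apply (𝕜 := 𝕜) 2 z i)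
  rw [hpi] at hupd
  exact (hasFDerivAt_toLp 2 _).comp z hupd

theorem hasGradientAt_sum_comp_toLp_update [DecidableEq ι] [∀ i, CompleteSpace (E i)]
    {f : PiLp 2 E → 𝕜} (x z : PiLp 2 E)
    (hf : ∀ i, DifferentiableAt 𝕜 f (toLp 2 (Function.update (ofLp x) i (z i)))) :
    HasGradientAt (fun w : PiLp 2 E => ∑ i, f (toLp 2 (Function.update (ofLp x) i (w i))))
      (toLp 2 fun j => gradient f (toLp 2 (Function.update (ofLp x) j (z j))) j) z := by
  have hsum := HasFDerivAt.fun_sum (u := Finset.univ) fun i _ =>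
    (hf i).hasFDerivAt.comp z (hasFDerivAt_toLp_update (𝕜 := 𝕜) x i z)
  refine hasGradientAt_iff_hasFDerivAt.2 (hsum.congr_fderiv (ContinuousLinearMap.ext fun v => ?_))
  calc _ = ∑ i, fderiv 𝕜 f (toLp 2 (Function.update (ofLp x) i (z i))) (single 2 i (v i)) :=
        _root_.sum_apply _ _ _
    _ = ∑ i, inner 𝕜 (gradient f (toLp 2 (Function.update (ofLp x) i (z i))) i) (v i) := by
        simp only [← inner_gradient_left, inner_single_right]
    _ = _ := by rw [InnerProductSpace.toDual_apply_apply, inner_apply]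

end Gradient

end PiLp

theorem stmt_10_general {m : ℕ} {n : Fin m → ℕ}
    (X : ∀ i : Fin m, Set (EuclideanSpace ℝ (Fin (n i))))
    (f : JVec m n → ℝ)
    (hf : ContDiff ℝ 1 f)
    (L : ℝ) (hL : 0 < L)
    (hLip : ∀ a b : JVec m n, (∀ i, a i ∈ X i) → (∀ i, b i ∈ X i) →
      ‖gradient f a - gradient f b‖ ≤ L * ‖a - b‖)
    (x y z : JVec m n)
    (hx : ∀ i, x i ∈ X i) (hy : ∀ i, y i ∈ X i) (hz : ∀ i, z i ∈ X i) :
    ‖gradient (fun w : JVec m n => ∑ i : Fin m, f (upd x i (w i))) z -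
        gradient (fun w : JVec m n => ∑ i : Fin m, f (upd y i (w i))) z‖
      ≤ Real.sqrt m * L * ‖x - y‖ := by
  have hfd : Differentiable ℝ f := hf.differentiable one_ne_zero
  have hmem : ∀ w : JVec m n, (∀ i, w i ∈ X i) → ∀ j i, upd w j (z j) i ∈ X i := fun w hw j =>
    Set.mem_univ_pi.1 ((Set.update_mem_pi_iff_of_mem (Set.mem_univ_pi.2 hw)).2 fun _ => hz j)
  unfold upd at hmem ⊢
  rw [(PiLp.hasGradientAt_sum_comp_toLp_update x z fun _ => hfd _).gradient,
    (PiLp.hasGradientAt_sum_comp_toLp_update y z fun _ => hfd _).gradient, mul_assoc]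
  refine (PiLp.norm_toLp_diag_sub_le fun j => ?_).trans_eq (by rw [Fintype.card_fin])
  calc _ ≤ L * ‖toLp 2 (Function.update (ofLp x) j (z j)) -
          toLp 2 (Function.update (ofLp y) j (z j))‖ := hLip _ _ (hmem x hx j) (hmem y hy j)
    _ ≤ L * ‖x - y‖ := by
        gcongr
        exact PiLp.norm_toLp_update_sub_toLp_update_le x y j (z j)

/-- Lemma 1: for `x, y, z ∈ X`, the gradients of `g_x(w) = Σᵢ f(wⁱ, x^{-i})` and
`g_y(w) = Σᵢ f(wⁱ, y^{-i})`, both evaluated at `z`, satisfy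
`‖∇g_x(z) − ∇g_y(z)‖ ≤ √m · L · ‖x − y‖`. -/
theorem stmt_10 {m : ℕ} {n : Fin m → ℕ}
    (X : ∀ i : Fin m, Set (EuclideanSpace ℝ (Fin (n i))))
    (hXne : ∀ i, (X i).Nonempty)
    (hXcpt : ∀ i, IsCompact (X i))
    (hXcvx : ∀ i, Convex ℝ (X i))
    (f : JVec m n → ℝ)
    (hf : ContDiff ℝ 1 f)
    (hfc : ConvexOn ℝ Set.univ f)
    (L : ℝ) (hL : 0 < L)
    (hLip : ∀ a b : JVec m n, (∀ i, a i ∈ X i) → (∀ i, b i ∈ X i) →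
      ‖gradient f a - gradient f b‖ ≤ L * ‖a - b‖)
    (x y z : JVec m n)
    (hx : ∀ i, x i ∈ X i) (hy : ∀ i, y i ∈ X i) (hz : ∀ i, z i ∈ X i) :
    ‖gradient (fun w : JVec m n => ∑ i : Fin m, f (upd x i (w i))) z -
        gradient (fun w : JVec m n => ∑ i : Fin m, f (upd y i (w i))) z‖
      ≤ Real.sqrt m * L * ‖x - y‖ :=
  stmt_10_general X f hf L hL hLip x y z hx hy hz
end
end

section
/- If c > ((m−1)/(2m−1)) · √m · L, then the sequence (x_k) generated by the regularized Jacobi iteration satisfies Σ_{k=1}^∞ ‖x_{k+1} − x_k‖² < ∞, and in particular ‖x_{k+1} − x_k‖ → 0 as k → ∞. -/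
open Matrix Filter Topology
open scoped RealInnerProductSpace

noncomputable section

/-!
For one Jacobi step `p ↦ q` put `D = q - p` and let `uᵢ` be `p` with only block `i` moved to `qᵢ`.
Since `p + D/m` is the average of the `uᵢ`, Jensen and the optimality of `qᵢ` against `pᵢ` give
`f (p + D/m) ≤ f p - (c/m) ‖D‖²`. First-order optimality of `qᵢ` gives
`⟪∇ᵢ f uᵢ, Dᵢ⟫ ≤ -2c ‖Dᵢ‖²`; as `‖q - uᵢ‖ ≤ ‖D‖`, the Lipschitz bound upgrades this to
`⟪∇f q, D⟫ ≤ (√m L - 2c) ‖D‖²`. The gradient inequality at `q`, evaluated at `p + D/m`, combines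
the two into `f q + β ‖D‖² ≤ f p` with `β = ((2m-1)c - (m-1)√m L)/m`, which is positive exactly
when `c > (m-1)/(2m-1) · √m L`. As `f` is bounded below on the compact set `X`, these decreases
telescope to a summable series.
-/

open Set

theorem ConvexOn.inner_gradient_sub_le {F : Type*} [NormedAddCommGroup F] [InnerProductSpace ℝ F]
    [CompleteSpace F] {f : F → ℝ} (hfc : ConvexOn ℝ univ f) {a : F}
    (hf : DifferentiableAt ℝ f a) (b : F) : ⟪gradient f a, b - a⟫ ≤ f b - f a := by
  have hline : ConvexOn ℝ univ (f ∘ AffineMap.lineMap a b) := hfc.comp_affineMap _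
  have hderiv : HasDerivAt (f ∘ AffineMap.lineMap a b) ⟪gradient f a, b - a⟫ (0 : ℝ) := by
    rw [inner_gradient_left]
    refine HasFDerivAt.comp_hasDerivAt (0 : ℝ) ?_ AffineMap.hasDerivAt_lineMap
    simpa using hf.hasFDerivAt
  simpa [slope] using hline.le_slope_of_hasDerivAt (mem_univ 0) (mem_univ 1) zero_lt_one hderiv

theorem summable_of_add_mul_le {a d : ℕ → ℝ} {β B : ℝ} (hβ : 0 < β) (hd : ∀ k, 0 ≤ d k)
    (hB : ∀ k, B ≤ a k) (h : ∀ k, a (k + 1) + β * d k ≤ a k) : Summable d := by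
  refine summable_of_sum_range_le (c := (a 0 - B) / β) hd fun N => ?_
  rw [le_div_iff₀' hβ, Finset.mul_sum]
  calc ∑ k ∈ Finset.range N, β * d k ≤ ∑ k ∈ Finset.range N, (a k - a (k + 1)) :=
        Finset.sum_le_sum fun k _ => by linarith [h k]
    _ = a 0 - a N := Finset.sum_range_sub' a N
    _ ≤ a 0 - B := by linarith [hB N]

section Blocks

variable {ι : Type*} {E : ι → Type*} [∀ i, NormedAddCommGroup (E i)]

theorem PiLp.toLp_update_sub [DecidableEq ι] (p : PiLp 2 E) (i : ι) (z : E i) :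
    WithLp.toLp 2 (Function.update p i z) - p = PiLp.single 2 i (z - p i) := by
  ext j
  by_cases h : j = i
  · subst h; simp
  · simp [h]

variable [Fintype ι]

theorem PiLp.sum_norm_apply_le (x : PiLp 2 E) : ∑ i, ‖x i‖ ≤ √(Fintype.card ι) * ‖x‖ := by
  rw [← Real.sqrt_sq (norm_nonneg x), ← Real.sqrt_mul (Nat.cast_nonneg _)]
  refine Real.le_sqrt_of_sq_le ?_
  rw [PiLp.norm_sq_eq_of_L2]
  exact sq_sum_le_card_mul_sum_sq

theorem PiLp.sum_toLp_update_sub [DecidableEq ι] (p q : PiLp 2 E) :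
    ∑ i, (WithLp.toLp 2 (Function.update p i (q i)) - p) = q - p := by
  ext j
  simp [toLp_update_sub, WithLp.ofLp_sum]

theorem PiLp.norm_sub_toLp_update_le [DecidableEq ι] (p q : PiLp 2 E) (i : ι) :
    ‖q - WithLp.toLp 2 (Function.update p i (q i))‖ ≤ ‖q - p‖ := by
  refine sq_le_sq₀ (norm_nonneg _) (norm_nonneg _) |>.1 ?_
  rw [PiLp.norm_sq_eq_of_L2, PiLp.norm_sq_eq_of_L2]
  refine Finset.sum_le_sum fun j _ => ?_
  by_cases h : j = i
  · subst h; simp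
  · simp [h]

variable [∀ i, InnerProductSpace ℝ (E i)]

theorem PiLp.inner_le_of_forall_inner_apply_le {g d : PiLp 2 E} {G : ι → PiLp 2 E} {a L : ℝ}
    (hL : 0 ≤ L) (hG : ∀ i, ⟪G i i, d i⟫ ≤ -a * ‖d i‖ ^ 2)
    (hgG : ∀ i, ‖g - G i‖ ≤ L * ‖d‖) :
    ⟪g, d⟫ ≤ (√(Fintype.card ι) * L - a) * ‖d‖ ^ 2 := by
  have hterm : ∀ i, ⟪g i, d i⟫ ≤ -a * ‖d i‖ ^ 2 + L * ‖d‖ * ‖d i‖ := fun i => by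
    have hclose : ⟪(g - G i) i, d i⟫ ≤ L * ‖d‖ * ‖d i‖ :=
      (real_inner_le_norm _ _).trans <| mul_le_mul_of_nonneg_right
        ((PiLp.norm_apply_le _ i).trans (hgG i)) (norm_nonneg _)
    rw [PiLp.sub_apply, inner_sub_left] at hclose
    linarith [hG i]
  calc ⟪g, d⟫ = ∑ i, ⟪g i, d i⟫ := PiLp.inner_apply g d
    _ ≤ ∑ i, (-a * ‖d i‖ ^ 2 + L * ‖d‖ * ‖d i‖) := Finset.sum_le_sum fun i _ => hterm i
    _ = -a * ‖d‖ ^ 2 + L * ‖d‖ * ∑ i, ‖d i‖ := by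
      rw [Finset.sum_add_distrib, ← Finset.mul_sum, ← Finset.mul_sum, ← PiLp.norm_sq_eq_of_L2]
    _ ≤ -a * ‖d‖ ^ 2 + L * ‖d‖ * (√(Fintype.card ι) * ‖d‖) := by
      gcongr
      exact sum_norm_apply_le d
    _ = (√(Fintype.card ι) * L - a) * ‖d‖ ^ 2 := by ring

variable [DecidableEq ι]

theorem PiLp.inner_single_right_s19 (x : PiLp 2 E) (i : ι) (v : E i) :
    ⟪x, PiLp.single 2 i v⟫ = ⟪x i, v⟫ := by
  rw [PiLp.inner_apply, Fintype.sum_eq_single i fun j hj => by simp [hj]]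
  simp

theorem PiLp.hasFDerivAt_toLp_update_s19 (p : PiLp 2 E) (i : ι) (z : E i) :
    HasFDerivAt (fun z => WithLp.toLp 2 (Function.update p i z))
      ((PiLp.continuousLinearEquiv 2 ℝ E).symm.toContinuousLinearMap ∘L
        ContinuousLinearMap.single ℝ E i) z := by
  refine ((PiLp.continuousLinearEquiv 2 ℝ E).symm.hasFDerivAt.comp z
    (hasFDerivAt_update _ z)).congr_fderiv ?_
  ext v j
  by_cases h : j = i
  · subst h; simp
  · simp [h]

theorem ConvexOn.map_add_inv_card_smul_sub_le [Nonempty ι] {f : PiLp 2 E → ℝ}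
    (hfc : ConvexOn ℝ univ f) (p q : PiLp 2 E) :
    f (p + (Fintype.card ι : ℝ)⁻¹ • (q - p)) ≤
      (Fintype.card ι : ℝ)⁻¹ * ∑ i, f (WithLp.toLp 2 (Function.update p i (q i))) := by
  have hcard : (Fintype.card ι : ℝ) ≠ 0 := Nat.cast_ne_zero.2 Fintype.card_ne_zero
  have hsum : ∑ _i : ι, (Fintype.card ι : ℝ)⁻¹ = 1 := by simp [hcard]
  have hcomb : ∑ i, (Fintype.card ι : ℝ)⁻¹ • WithLp.toLp 2 (Function.update p i (q i)) =
      p + (Fintype.card ι : ℝ)⁻¹ • (q - p) := by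
    calc _ = ∑ i, ((Fintype.card ι : ℝ)⁻¹ • p +
          (Fintype.card ι : ℝ)⁻¹ • (WithLp.toLp 2 (Function.update p i (q i)) - p)) := by
          simp [smul_sub]
      _ = _ := by
          rw [Finset.sum_add_distrib, Finset.sum_const, Finset.card_univ, ← Finset.smul_sum,
            PiLp.sum_toLp_update_sub, ← Nat.cast_smul_eq_nsmul ℝ, smul_smul,
            mul_inv_cancel₀ hcard, one_smul]
  have := hfc.map_sum_le (t := Finset.univ)
    (p := fun i => WithLp.toLp 2 (Function.update p i (q i)))
    (fun _ _ => by positivity) hsum (fun _ _ => mem_univ _)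
  rw [hcomb] at this
  simpa [Finset.mul_sum] using this

variable [∀ i, CompleteSpace (E i)]

theorem IsMinOn.inner_gradient_apply_nonneg {f : PiLp 2 E → ℝ}
    {p : PiLp 2 E} {i : ι} {s : Set (E i)} {a z₀ z : E i} {c : ℝ}
    (hmin : IsMinOn (fun z => f (WithLp.toLp 2 (Function.update p i z)) + c * ‖z - a‖ ^ 2) s z₀)
    (hs : Convex ℝ s) (hz₀ : z₀ ∈ s) (hz : z ∈ s)
    (hf : DifferentiableAt ℝ f (WithLp.toLp 2 (Function.update p i z₀))) :
    0 ≤ ⟪gradient f (WithLp.toLp 2 (Function.update p i z₀)) i + (2 * c) • (z₀ - a), z - z₀⟫ := by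
  have hG := (hf.hasFDerivAt.comp z₀ (PiLp.hasFDerivAt_toLp_update_s19 p i z₀)).add
    ((((hasFDerivAt_id z₀).sub_const a).norm_sq).const_mul c)
  have := hmin.localize.hasFDerivWithinAt_nonneg hG.hasFDerivWithinAt
    (sub_mem_posTangentConeAt_of_segment_subset (hs.segment_subset hz₀ hz))
  simp [← inner_gradient_left, PiLp.inner_single_right_s19] at this
  rw [inner_add_left, real_inner_smul_left, inner_sub_left]
  linarith

theorem jacobi_sufficient_decrease [Nonempty ι] {f : PiLp 2 E → ℝ} (hf : Differentiable ℝ f)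
    (hfc : ConvexOn ℝ univ f) {X : ∀ i, Set (E i)} (hX : ∀ i, Convex ℝ (X i)) {L c : ℝ}
    (hL : 0 ≤ L) (hLip : ∀ a b : PiLp 2 E, (∀ i, a i ∈ X i) → (∀ i, b i ∈ X i) →
      ‖gradient f a - gradient f b‖ ≤ L * ‖a - b‖)
    {p q : PiLp 2 E} (hp : ∀ i, p i ∈ X i) (hq : ∀ i, q i ∈ X i)
    (hmin : ∀ i, IsMinOn (fun z => f (WithLp.toLp 2 (Function.update p i z)) + c * ‖z - p i‖ ^ 2)
      (X i) (q i)) :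
    f q + ((2 * Fintype.card ι - 1) * c - (Fintype.card ι - 1) * (√(Fintype.card ι) * L)) /
      Fintype.card ι * ‖q - p‖ ^ 2 ≤ f p := by
  set N : ℝ := (Fintype.card ι : ℝ)
  set u : ι → PiLp 2 E := fun i => WithLp.toLp 2 (Function.update p i (q i))
  have hN : 1 ≤ N := Nat.one_le_cast.2 Fintype.card_pos
  have hu : ∀ i j, u i j ∈ X j := fun i j => by
    by_cases h : j = i
    · subst h; simpa [u] using hq j
    · simpa [u, h] using hp j
  have hblock : ∀ i, f (u i) + c * ‖(q - p) i‖ ^ 2 ≤ f p := fun i => by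
    simpa using hmin i (hp i)
  have hjensen : f (p + N⁻¹ • (q - p)) ≤ f p - c * N⁻¹ * ‖q - p‖ ^ 2 := by
    have hsum := Finset.sum_le_sum fun i (_ : i ∈ Finset.univ) => hblock i
    rw [Finset.sum_add_distrib, ← Finset.mul_sum, ← PiLp.norm_sq_eq_of_L2, Finset.sum_const,
      Finset.card_univ, nsmul_eq_mul] at hsum
    calc f (p + N⁻¹ • (q - p)) ≤ N⁻¹ * ∑ i, f (u i) := hfc.map_add_inv_card_smul_sub_le p q
      _ ≤ N⁻¹ * (N * f p - c * ‖q - p‖ ^ 2) := by gcongr; linarith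
      _ = f p - c * N⁻¹ * ‖q - p‖ ^ 2 := by field_simp
  have hfoc : ∀ i, ⟪gradient f (u i) i, (q - p) i⟫ ≤ -(2 * c) * ‖(q - p) i‖ ^ 2 := fun i => by
    have := (hmin i).inner_gradient_apply_nonneg (hX i) (hq i) (hp i) (hf _)
    rw [← neg_sub (q i), inner_neg_right, inner_add_left, real_inner_smul_left,
      real_inner_self_eq_norm_sq] at this
    rw [PiLp.sub_apply]
    linarith
  have hinner : ⟪gradient f q, q - p⟫ ≤ (√N * L - 2 * c) * ‖q - p‖ ^ 2 :=
    PiLp.inner_le_of_forall_inner_apply_le hL hfoc fun i =>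
      (hLip q (u i) hq (hu i)).trans
        (mul_le_mul_of_nonneg_left (PiLp.norm_sub_toLp_update_le p q i) hL)
  have hgrad := hfc.inner_gradient_sub_le (hf q) (p + N⁻¹ • (q - p))
  rw [show p + N⁻¹ • (q - p) - q = -(1 - N⁻¹) • (q - p) by module, real_inner_smul_right] at hgrad
  have h1N : 0 ≤ 1 - N⁻¹ := sub_nonneg.2 (inv_le_one_of_one_le₀ hN)
  have hβ : ((2 * N - 1) * c - (N - 1) * (√N * L)) / N =
      c * N⁻¹ - (1 - N⁻¹) * (√N * L - 2 * c) := by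
    field_simp
    ring
  rw [hβ]
  linarith [mul_le_mul_of_nonneg_left hinner h1N]

end Blocks

theorem stmt_19_general {m : ℕ} {n : Fin m → ℕ}
    (X : ∀ i : Fin m, Set (EuclideanSpace ℝ (Fin (n i))))
    (hXcpt : ∀ i, IsCompact (X i))
    (hXcvx : ∀ i, Convex ℝ (X i))
    (f : JVec m n → ℝ)
    (hf : ContDiff ℝ 1 f)
    (hfc : ConvexOn ℝ Set.univ f)
    (L : ℝ) (hL : 0 < L)
    (hLip : ∀ a b : JVec m n, (∀ i, a i ∈ X i) → (∀ i, b i ∈ X i) →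
      ‖gradient f a - gradient f b‖ ≤ L * ‖a - b‖)
    (c : ℝ) (hc : ((m : ℝ) - 1) / (2 * m - 1) * (Real.sqrt m * L) < c)
    (x : ℕ → JVec m n) (hx0 : ∀ i, x 0 i ∈ X i)
    (hrec : ∀ k : ℕ, ∀ i : Fin m, x (k + 1) i ∈ X i ∧
      ∀ z ∈ X i,
        f (upd (x k) i (x (k + 1) i)) + c * ‖x (k + 1) i - x k i‖ ^ 2 ≤
          f (upd (x k) i z) + c * ‖z - x k i‖ ^ 2) :
    Summable (fun k : ℕ => ‖x (k + 1) - x k‖ ^ 2) ∧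
      Tendsto (fun k : ℕ => ‖x (k + 1) - x k‖) atTop (𝓝 0) := by
  rcases Nat.eq_zero_or_pos m with rfl | hm
  · have hstep : ∀ k, x (k + 1) - x k = 0 := fun k => Subsingleton.elim _ _
    simp [hstep, summable_zero]
  have : Nonempty (Fin m) := ⟨⟨0, hm⟩⟩
  have hmem : ∀ k i, x k i ∈ X i := fun k => Nat.rec hx0 (fun k _ i => (hrec k i).1) k
  obtain ⟨B, hB⟩ := ((isCompact_univ_pi hXcpt).image (PiLp.continuous_toLp 2 _)).bddBelow_image
    hf.continuous.continuousOn
  have hlower : ∀ k, B ≤ f (x k) := fun k =>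
    hB ⟨x k, ⟨(x k).ofLp, fun i _ => hmem k i, rfl⟩, rfl⟩
  have hβ : 0 < ((2 * m - 1) * c - (m - 1) * (√m * L)) / m := by
    have h2m : (0 : ℝ) < 2 * m - 1 := by linarith [(Nat.one_le_cast (α := ℝ)).2 hm]
    rw [div_mul_eq_mul_div, div_lt_iff₀ h2m] at hc
    exact div_pos (by linarith) (by positivity)
  have hsum : Summable (fun k : ℕ => ‖x (k + 1) - x k‖ ^ 2) :=
    summable_of_add_mul_le hβ (fun k => sq_nonneg _) hlower fun k => by
      simpa using jacobi_sufficient_decrease (hf.differentiable one_ne_zero) hfc hXcvx hL.le hLip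
        (hmem k) (hmem (k + 1)) fun i => isMinOn_iff.2 (hrec k i).2
  exact ⟨hsum, by simpa using hsum.tendsto_atTop_zero.sqrt⟩

/-- If `c > ((m−1)/(2m−1))·√m·L`, the regularized Jacobi iterates satisfy
`Σₖ ‖x_{k+1} − x_k‖² < ∞`, and in particular `‖x_{k+1} − x_k‖ → 0`. -/
theorem stmt_19 {m : ℕ} {n : Fin m → ℕ}
    (X : ∀ i : Fin m, Set (EuclideanSpace ℝ (Fin (n i))))
    (hXne : ∀ i, (X i).Nonempty)
    (hXcpt : ∀ i, IsCompact (X i))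
    (hXcvx : ∀ i, Convex ℝ (X i))
    (f : JVec m n → ℝ)
    (hf : ContDiff ℝ 1 f)
    (hfc : ConvexOn ℝ Set.univ f)
    (L : ℝ) (hL : 0 < L)
    (hLip : ∀ a b : JVec m n, (∀ i, a i ∈ X i) → (∀ i, b i ∈ X i) →
      ‖gradient f a - gradient f b‖ ≤ L * ‖a - b‖)
    (c : ℝ) (hc : ((m : ℝ) - 1) / (2 * m - 1) * (Real.sqrt m * L) < c)
    (x : ℕ → JVec m n) (hx0 : ∀ i, x 0 i ∈ X i)
    (hrec : ∀ k : ℕ, ∀ i : Fin m, x (k + 1) i ∈ X i ∧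
      ∀ z ∈ X i,
        f (upd (x k) i (x (k + 1) i)) + c * ‖x (k + 1) i - x k i‖ ^ 2 ≤
          f (upd (x k) i z) + c * ‖z - x k i‖ ^ 2) :
    Summable (fun k : ℕ => ‖x (k + 1) - x k‖ ^ 2) ∧
      Tendsto (fun k : ℕ => ‖x (k + 1) - x k‖) atTop (𝓝 0) :=
  stmt_19_general X hXcpt hXcvx f hf hfc L hL hLip c hc x hx0 hrec
end
end
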